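/- Define Add(x,y,z,w) = Ñum(w) ∧ Sim(y,w) ∧ Plus(x,w,z), where Ñum(w) is 0̃ ≐ S(0̃) → 0̃ ≐ w, Sim(y,w) is 0 ≐ 0̃ → y ≐ w, and Plus(x,w,z) is 0̃ ≐ x → z ≐ w. Then there exists a closed term d such that Add(Sᵐ(0), Sᵖ(0), Sᵠ(0), d) is valid if and only if q = m + p. -/

import Mathlib

open FirstOrder Language

def L : FirstOrder.Language := ⟨fun _ => ℕ, fun _ => ℕ⟩

abbrev CTerm : Type := L.Term Empty

def kC {α : Type} (n : ℕ) : L.Term α := Term.func (n : L.Functions 0) ![]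
def Sf {α : Type} (t : L.Term α) : L.Term α := Term.func ((0 : ℕ) : L.Functions 1) ![t]
def Snum {α : Type} : ℕ → L.Term α → L.Term α
  | 0, t => t
  | m+1, t => Sf (Snum m t)
def pairT {α : Type} (t u : L.Term α) : L.Term α := Term.func ((0 : ℕ) : L.Functions 2) ![t, u]

def Valid {L' : FirstOrder.Language} (φ : L'.Sentence) : Prop :=
  ∀ (M : Type) [L'.Structure M] [Nonempty M], M ⊨ φ

def J (j k : ℕ) : ℕ := (j + k) * (j + k + 1) + k + 1

/-- Ñum(w) is 0̃ ≐ S(0̃) → 0̃ ≐ w, with 0̃ the constant of index 1. -/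
def NumTildeF (w : CTerm) : L.Sentence :=
  (Term.equal (kC 1) (Sf (kC 1))).imp (Term.equal (kC 1) w)

/-- Sim(y,w) is 0 ≐ 0̃ → y ≐ w. -/
def SimF (y w : CTerm) : L.Sentence :=
  (Term.equal (kC 0) (kC 1)).imp (Term.equal y w)

/-- Plus(x,w,z) is 0̃ ≐ x → z ≐ w. -/
def PlusF (x w z : CTerm) : L.Sentence :=
  (Term.equal (kC 1) x).imp (Term.equal z w)

/-- Add(x,y,z,w) = Ñum(w) ∧ Sim(y,w) ∧ Plus(x,w,z). -/
def AddF (x y z w : CTerm) : L.Sentence :=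
  NumTildeF w ⊓ SimF y w ⊓ PlusF x w z

/-! If `d` works, evaluate it in `Bool` with `S` the identity, `0̃` true and every other symbol
false: `0̃ ≐ S(0̃)` holds there, so `Ñum` makes `d` true, and the only closed terms with value true
are the `Sᵏ(0̃)`. In `ℕ` with `0 ↦ 0` and `S ↦ succ`, the term `Sᵏ(0̃)` then has value `b + k` when
`0̃ ↦ b`; taking `b = 0` makes `Sim` say `p = k`, taking `b = m` makes `Plus` say `q = m + k`.
Conversely `d = Sᵖ(0̃)` satisfies all three clauses in every structure. -/

def succInterp (M : Type) [L.Structure M] (x : M) : M :=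
  Structure.funMap (L := L) ((0 : ℕ) : L.Functions 1) ![x]

section

variable {M : Type} [L.Structure M]

theorem realize_Sf {α : Type} (v : α → M) (t : L.Term α) :
    (Sf t).realize v = succInterp M (t.realize v) :=
  Term.realize_functions_apply₁

theorem realize_Snum {α : Type} (v : α → M) (k : ℕ) (t : L.Term α) :
    (Snum k t).realize v = (succInterp M)^[k] (t.realize v) := by
  induction k with
  | zero => rfl
  | succ k ih => rw [Snum, realize_Sf, ih, Function.iterate_succ_apply']

theorem realize_AddF (x y z w : CTerm) :
    M ⊨ AddF x y z w ↔
      ((kC 1 : CTerm).realize default = succInterp M ((kC 1 : CTerm).realize default) →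
          (kC 1 : CTerm).realize default = w.realize (default : Empty → M)) ∧
      ((kC 0 : CTerm).realize default = (kC 1 : CTerm).realize (default : Empty → M) →
          y.realize default = w.realize (default : Empty → M)) ∧
      ((kC 1 : CTerm).realize default = x.realize (default : Empty → M) →
          z.realize default = w.realize (default : Empty → M)) := by
  simp only [AddF, NumTildeF, SimF, PlusF, Sentence.Realize, Formula.realize_inf,
    Formula.realize_imp, Formula.realize_equal, realize_Sf, and_assoc]

theorem valid_AddF_Snum (m p : ℕ) :
    Valid (AddF (Snum m (kC 0)) (Snum p (kC 0)) (Snum (m + p) (kC 0)) (Snum p (kC 1))) := by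
  intro M _ _
  simp only [realize_AddF, realize_Snum]
  refine ⟨fun h => (Function.iterate_fixed h.symm p).symm, fun h => by rw [h], fun h => ?_⟩
  rw [add_comm, Function.iterate_add_apply, ← h]

end

abbrev numeralStructure {M : Type} (zero zero' junk : M) (s : M → M) :
    L.Structure M where
  funMap {n} f args := match n, (show ℕ from f), args with
    | 0, 0, _ => zero
    | 0, 1, _ => zero'
    | 1, 0, args => s (args 0)
    | _, _, _ => junk
  RelMap _ _ := False

section NumeralStructure

variable {M : Type} (zero zero' junk : M) (s : M → M) {α : Type} (v : α → M)

theorem numeralStructure_succInterp :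
    @succInterp M (numeralStructure zero zero' junk s) = s := rfl

theorem numeralStructure_realize_kC_zero :
    @Term.realize L M (numeralStructure zero zero' junk s) α v (kC 0) = zero := rfl

theorem numeralStructure_realize_kC_one :
    @Term.realize L M (numeralStructure zero zero' junk s) α v (kC 1) = zero' := rfl

end NumeralStructure

theorem eq_Snum_of_realize_eq_true (v : Empty → Bool) (t : CTerm)
    (ht : @Term.realize L Bool (numeralStructure false true false id) _ v t = true) :
    ∃ k, t = Snum k (kC 1) := by
  induction t with
  | var e => exact e.elim
  | @func n f args ih =>
    change ℕ at f
    rcases n with _ | _ | n <;> rcases f with _ | _ | f <;>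
      try exact absurd ht Bool.false_ne_true
    · exact ⟨0, congrArg _ (Subsingleton.elim _ _)⟩
    · obtain ⟨k, hk⟩ := ih 0 ht
      refine ⟨k + 1, ?_⟩
      rw [Snum, ← hk, Sf]
      congr
      funext i
      fin_cases i
      rfl

theorem exists_eq_Snum_of_valid_AddF {x y z d : CTerm} (h : Valid (AddF x y z d)) :
    ∃ k, d = Snum k (kC 1) := by
  let _ := numeralStructure false true false id
  exact eq_Snum_of_realize_eq_true _ d (((realize_AddF x y z d).mp (h Bool)).1 rfl).symm

theorem eq_and_eq_add_of_valid_AddF_Snum {m p q k : ℕ}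
    (h : Valid (AddF (Snum m (kC 0)) (Snum p (kC 0)) (Snum q (kC 0)) (Snum k (kC 1)))) :
    p = k ∧ q = m + k := by
  have hNat (b : ℕ) := (@realize_AddF ℕ (numeralStructure 0 b 0 Nat.succ) _ _ _ _).mp
    (@h ℕ (numeralStructure 0 b 0 Nat.succ) ⟨0⟩)
  simp only [realize_Snum, numeralStructure_succInterp, numeralStructure_realize_kC_zero,
    numeralStructure_realize_kC_one, Nat.succ_iterate, zero_add] at hNat
  exact ⟨((hNat 0).2.1 rfl).trans (zero_add k), (hNat m).2.2 rfl⟩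

theorem stmt_8 (m p q : ℕ) :
    (∃ d : CTerm, Valid (AddF (Snum m (kC 0)) (Snum p (kC 0)) (Snum q (kC 0)) d)) ↔
      q = m + p := by
  constructor
  · rintro ⟨d, hd⟩
    obtain ⟨k, rfl⟩ := exists_eq_Snum_of_valid_AddF hd
    obtain ⟨rfl, rfl⟩ := eq_and_eq_add_of_valid_AddF_Snum hd
    rfl
  · rintro rfl
    exact ⟨_, valid_AddF_Snum m p⟩
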